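/- Let R be a rigid topological ring and M a free R-module. Then the canonical map Λ_M : M → ((M*, weak-*))', v ↦ (ℓ ↦ ℓ(v)), is an isomorphism of R-modules. -/

import Mathlib

/-!
Choosing a basis `b` indexed by `ι` identifies `M*` with `R^ι`, and the weak-* topology makes this
identification continuous, since each evaluation `ℓ ↦ ℓ v` only involves the finitely many
coordinates in the support of `b.repr v`. A continuous functional `T` on `M*` therefore restricts
to a continuous functional on `R^ι`, which by rigidity is `f ↦ Σ p(x) f(x)` for some finitely
supported `p`; then `T = Λ_M (Σ p(x) b x)`. Injectivity of `Λ_M` holds for any projective module,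
because linear functionals separate its points.
-/

universe u

/-- The weak-* topology on the algebraic dual of a module. -/
instance weakStar (R M : Type*) [CommRing R] [TopologicalSpace R]
    [AddCommGroup M] [Module R M] : TopologicalSpace (M →ₗ[R] R) :=
  TopologicalSpace.induced (fun ℓ => (⇑ℓ : M → R)) Pi.topologicalSpace

/-- A topological ring is rigid when for every set `X`, the map
`λ_X : (X →₀ R) → (R^X)'` is surjective onto the continuous dual of `R^X`. -/
def IsRigid (R : Type u) [CommRing R] [TopologicalSpace R] : Prop :=
  ∀ (X : Type u) (ℓ : (X → R) →L[R] R),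
    ∃ p : X →₀ R, ∀ f, ℓ f = p.sum fun x c => c * f x

open Module

section WeakStarEval

variable (R M : Type*) [CommRing R] [TopologicalSpace R] [AddCommGroup M] [Module R M]

theorem continuous_weakStar_eval (v : M) : Continuous fun ℓ : M →ₗ[R] R => ℓ v :=
  (continuous_apply v).comp continuous_induced_dom

variable [IsTopologicalRing R]

def weakStarEval : M →ₗ[R] ((M →ₗ[R] R) →L[R] R) where
  toFun v := ⟨Dual.eval R M v, continuous_weakStar_eval R M v⟩
  map_add' v w := by ext ℓ; exact ℓ.map_add v w
  map_smul' c v := by ext ℓ; exact ℓ.map_smul c v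

@[simp]
theorem weakStarEval_apply (v : M) (ℓ : M →ₗ[R] R) : weakStarEval R M v ℓ = ℓ v :=
  rfl

theorem weakStarEval_injective [Projective R M] : Function.Injective (weakStarEval R M) :=
  fun _ _ hvw => eval_apply_injective R (LinearMap.ext fun ℓ => DFunLike.congr_fun hvw ℓ)

variable {R M}

theorem Module.Basis.continuous_constr {ι : Type*} (b : Basis ι R M) :
    Continuous (b.constr R : (ι → R) → M →ₗ[R] R) := by
  refine continuous_induced_rng.2 (continuous_pi fun v => ?_)
  have hcoord : (fun f : ι → R => b.constr R f v)
      = fun f => ∑ x ∈ (b.repr v).support, b.repr v x * f x := by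
    funext f
    simp only [Basis.constr_apply, Finsupp.sum, smul_eq_mul]
  exact hcoord ▸ continuous_finsetSum _ fun x _ => continuous_const.mul (continuous_apply x)

end WeakStarEval

theorem weakStarEval_surjective_of_basis {R : Type u} [CommRing R] [TopologicalSpace R]
    [IsTopologicalRing R] (h : IsRigid R) {M : Type*} [AddCommGroup M] [Module R M] {ι : Type u}
    (b : Basis ι R M) : Function.Surjective (weakStarEval R M) := by
  intro T
  let Tb : (ι → R) →L[R] R :=
    ⟨T.toLinearMap ∘ₗ (b.constr R).toLinearMap, T.continuous.comp b.continuous_constr⟩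
  obtain ⟨p, hp⟩ := h ι Tb
  refine ⟨b.repr.symm p, ContinuousLinearMap.ext fun ℓ => ?_⟩
  have hT : T ℓ = Tb fun x => ℓ (b x) := by
    conv_lhs => rw [← b.constr_self R ℓ]
    rfl
  rw [weakStarEval_apply, hT, hp, Basis.repr_symm_apply, Finsupp.linearCombination_apply,
    map_finsuppSum]
  simp only [map_smul, smul_eq_mul]

theorem stmt16_general {R : Type u} [CommRing R] [TopologicalSpace R] [IsTopologicalRing R]
    (h : IsRigid R) (M : Type u) [AddCommGroup M] [Module R M] [Module.Free R M] :
    ∃ e : M ≃ₗ[R] ((M →ₗ[R] R) →L[R] R),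
      ∀ (v : M) (ℓ : M →ₗ[R] R), e v ℓ = ℓ v :=
  ⟨.ofBijective (weakStarEval R M)
      ⟨weakStarEval_injective R M, weakStarEval_surjective_of_basis h (Free.chooseBasis R M)⟩,
    fun _ _ => rfl⟩

/-- For a rigid ring `R` and a free module `M`, the canonical map
`Λ_M : M → ((M*, weak-*))'`, `v ↦ (ℓ ↦ ℓ v)`, is an isomorphism of `R`-modules. -/
theorem stmt16 {R : Type u} [CommRing R] [TopologicalSpace R] [IsTopologicalRing R] [T2Space R]
    (h : IsRigid R) (M : Type u) [AddCommGroup M] [Module R M] [Module.Free R M] :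
    ∃ e : M ≃ₗ[R] ((M →ₗ[R] R) →L[R] R),
      ∀ (v : M) (ℓ : M →ₗ[R] R), e v ℓ = ℓ v :=
  stmt16_general h M
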